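/- For all real q with q > 0, and with h_{-2q}(λ) = (1/Γ(2q)) ∫_0^∞ t^{2q-1} e^{-t²/2-λt} dt, the Mellin-type identity holds for θ > -1/2: 2 ∫_0^∞ λ^{2θ} h_{-2q}(λ) φ(λ) dλ = 2^{-θ-q} Γ(2θ+1)/Γ(q+θ+1), where φ(λ) = (2π)^{-1/2} e^{-λ²/2}. -/
import Mathlib


open Real MeasureTheory

section HMAux
open Set


lemma hm_integrableOn_beta {a b s : ℝ} (ha : -1 < a) (hb : -1 < b) (hs : 0 < s) :
    IntegrableOn (fun l => l ^ a * (s - l) ^ b) (Set.Ioo 0 s) := by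
  have hmeas : Measurable (fun l : ℝ => l ^ a * (s - l) ^ b) := by fun_prop
  have h1 : IntegrableOn (fun l : ℝ => l ^ a * (s - l) ^ b) (Set.Ioc 0 (s/2)) := by
    have hint : IntegrableOn (fun l : ℝ => max ((s/2) ^ b) (s ^ b) * l ^ a) (Set.Ioc 0 (s/2)) := by
      have := (intervalIntegral.intervalIntegrable_rpow' (a := 0) (b := s/2) ha)
      rw [intervalIntegrable_iff, uIoc_of_le (by linarith)] at this
      exact this.const_mul _
    refine Integrable.mono hint hmeas.aestronglyMeasurable.restrict (ae_restrict_of_forall_mem measurableSet_Ioc ?_)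
    intro l hl
    have hl0 : 0 < l := hl.1
    have hsl : s/2 ≤ s - l := by linarith [hl.2]
    have hsl0 : 0 < s - l := by linarith [hl.2, hs]
    rw [Real.norm_eq_abs, Real.norm_eq_abs, abs_of_nonneg (by positivity),
      abs_of_nonneg (by positivity)]
    have hbound : (s - l) ^ b ≤ max ((s/2) ^ b) (s ^ b) := by
      rcases le_or_gt 0 b with hb' | hb'
      · exact le_max_of_le_right (Real.rpow_le_rpow hsl0.le (by linarith [hl.1]) hb')
      · exact le_max_of_le_left (Real.rpow_le_rpow_of_nonpos (by linarith) hsl hb'.le)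
    calc l ^ a * (s - l) ^ b ≤ l ^ a * max ((s/2) ^ b) (s ^ b) := by
          exact mul_le_mul_of_nonneg_left hbound (by positivity)
      _ = max ((s/2) ^ b) (s ^ b) * l ^ a := by ring
  have h2 : IntegrableOn (fun l : ℝ => l ^ a * (s - l) ^ b) (Set.Ico (s/2) s) := by
    have hint : IntegrableOn (fun l : ℝ => max ((s/2) ^ a) (s ^ a) * (s - l) ^ b) (Set.Ico (s/2) s) := by
      have h0 : IntervalIntegrable (fun x : ℝ => x ^ b) volume 0 (s/2) :=
        intervalIntegral.intervalIntegrable_rpow' hb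
      have h0' := (h0.comp_sub_left s).symm
      rw [intervalIntegrable_iff, uIoc_of_le (by linarith : s - s/2 ≤ s - 0), show s - (0:ℝ) = s by ring] at h0'
      have : IntegrableOn (fun x : ℝ => (s - x) ^ b) (Set.Ico (s/2) s) := by
        have heq : s - s/2 = s/2 := by ring
        rw [heq] at h0'
        refine (h0'.mono_set ?_).congr_set_ae (Ioo_ae_eq_Ico).symm
        exact Set.Ioo_subset_Ioc_self
      exact this.const_mul _
    refine Integrable.mono hint hmeas.aestronglyMeasurable.restrict (ae_restrict_of_forall_mem measurableSet_Ico ?_)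
    intro l hl
    have hl0 : 0 < l := lt_of_lt_of_le (by positivity) hl.1
    have hsl0 : 0 < s - l := by linarith [hl.2]
    rw [Real.norm_eq_abs, Real.norm_eq_abs, abs_of_nonneg (by positivity),
      abs_of_nonneg (by positivity)]
    have hbound : l ^ a ≤ max ((s/2) ^ a) (s ^ a) := by
      rcases le_or_gt 0 a with ha' | ha'
      · exact le_max_of_le_right (Real.rpow_le_rpow hl0.le hl.2.le ha')
      · exact le_max_of_le_left (Real.rpow_le_rpow_of_nonpos (by positivity) hl.1 ha'.le)
    calc l ^ a * (s - l) ^ b ≤ max ((s/2) ^ a) (s ^ a) * (s - l) ^ b := by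
          exact mul_le_mul_of_nonneg_right hbound (by positivity)
      _ = _ := rfl
  have : Set.Ioo 0 s ⊆ Set.Ioc 0 (s/2) ∪ Set.Ico (s/2) s := by
    intro x hx
    rcases le_or_gt x (s/2) with h | h
    · exact Or.inl ⟨hx.1, h⟩
    · exact Or.inr ⟨h.le, hx.2⟩
  exact (h1.union h2).mono_set this

lemma hm_beta_value {a b s : ℝ} (ha : -1 < a) (hb : -1 < b) (hs : 0 < s) :
    ∫ l in Set.Ioo 0 s, l ^ a * (s - l) ^ b =
      s ^ (a + b + 1) * (Real.Gamma (a + 1) * Real.Gamma (b + 1) / Real.Gamma (a + b + 2)) := by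
  have hu : (0:ℝ) < a + 1 := by linarith
  have hv : (0:ℝ) < b + 1 := by linarith
  have huv : (0:ℝ) < a + b + 2 := by linarith
  have hGuv : Complex.Gamma ((a:ℂ) + 1 + ((b:ℂ) + 1)) ≠ 0 := by
    have : (a:ℂ) + 1 + ((b:ℂ) + 1) = ((a + b + 2 : ℝ) : ℂ) := by push_cast; ring
    rw [this, Complex.Gamma_ofReal]
    exact_mod_cast (Real.Gamma_pos_of_pos huv).ne'
  have hbeta : Complex.betaIntegral ((a:ℂ) + 1) ((b:ℂ) + 1)
      = Complex.Gamma ((a:ℂ)+1) * Complex.Gamma ((b:ℂ)+1) / Complex.Gamma ((a:ℂ)+1+((b:ℂ)+1)) := by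
    rw [Complex.Gamma_mul_Gamma_eq_betaIntegral (by simpa using hu) (by simpa using hv)]
    field_simp
  have key := Complex.betaIntegral_scaled ((a:ℂ) + 1) ((b:ℂ) + 1) hs
  have hre : ∫ x in (0:ℝ)..s, (x:ℂ) ^ ((a:ℂ) + 1 - 1) * ((s:ℂ) - x) ^ ((b:ℂ) + 1 - 1)
      = ((∫ l in (0:ℝ)..s, l ^ a * (s - l) ^ b : ℝ) : ℂ) := by
    rw [← intervalIntegral.integral_ofReal]
    refine intervalIntegral.integral_congr fun x hx => ?_
    rw [Set.uIcc_of_le hs.le] at hx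
    rw [Complex.ofReal_mul, Complex.ofReal_cpow hx.1,
      Complex.ofReal_cpow (by linarith [hx.2] : (0:ℝ) ≤ s - x)]
    rw [add_sub_cancel_right, add_sub_cancel_right]
    push_cast
    ring
  rw [hre, hbeta] at key
  have hpow : ((s:ℂ)) ^ ((a:ℂ) + 1 + ((b:ℂ) + 1) - 1) = ((s ^ (a + b + 1) : ℝ) : ℂ) := by
    rw [Complex.ofReal_cpow hs.le]
    norm_num
    ring_nf
  have hG1 : Complex.Gamma ((a:ℂ) + 1) = ((Real.Gamma (a+1) : ℝ) : ℂ) := by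
    rw [show (a:ℂ) + 1 = ((a + 1 : ℝ) : ℂ) by push_cast; ring, Complex.Gamma_ofReal]
  have hG2 : Complex.Gamma ((b:ℂ) + 1) = ((Real.Gamma (b+1) : ℝ) : ℂ) := by
    rw [show (b:ℂ) + 1 = ((b + 1 : ℝ) : ℂ) by push_cast; ring, Complex.Gamma_ofReal]
  have hG3 : Complex.Gamma ((a:ℂ) + 1 + ((b:ℂ) + 1)) = ((Real.Gamma (a+b+2) : ℝ) : ℂ) := by
    rw [show (a:ℂ) + 1 + ((b:ℂ) + 1) = ((a + b + 2 : ℝ) : ℂ) by push_cast; ring,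
      Complex.Gamma_ofReal]
  rw [hpow, hG1, hG2, hG3] at key
  have key2 : (∫ l in (0:ℝ)..s, l ^ a * (s - l) ^ b)
      = s ^ (a + b + 1) * (Real.Gamma (a + 1) * Real.Gamma (b + 1) / Real.Gamma (a + b + 2)) := by
    have := key
    rw [← Complex.ofReal_mul, ← Complex.ofReal_div, ← Complex.ofReal_mul] at this
    · exact_mod_cast this
  rw [← key2, intervalIntegral.integral_of_le hs.le, MeasureTheory.integral_Ioc_eq_integral_Ioo]
lemma hm_final (q θ : ℝ) (hq : 0 < q) (hθ : θ > -(1/2)) :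
    2 * ((Real.sqrt (2*π))⁻¹ * (Real.Gamma (2*q))⁻¹ *
      ((Real.Gamma (2*θ+1) * Real.Gamma (2*q) / Real.Gamma (2*θ+2*q+1)) *
        (((1:ℝ)/2) ^ (-(2*θ+2*q+1)/2) * (1/2) * Real.Gamma ((2*θ+2*q+1)/2))))
      = 2 ^ (-θ-q) * Real.Gamma (2*θ+1) / Real.Gamma (q+θ+1) := by
  have hπ : (0:ℝ) < π := Real.pi_pos
  set z : ℝ := θ + q + 1/2 with hz
  have hz0 : 0 < z := by simp only [hz]; linarith
  have hdup := Real.Gamma_mul_Gamma_add_half z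
  have hΓz : 0 < Real.Gamma z := Real.Gamma_pos_of_pos hz0
  have hΓz2 : 0 < Real.Gamma (z + 1/2) := Real.Gamma_pos_of_pos (by linarith)
  have hΓ2z : 0 < Real.Gamma (2*z) := Real.Gamma_pos_of_pos (by linarith)
  have hΓ2q : 0 < Real.Gamma (2*q) := Real.Gamma_pos_of_pos (by linarith)
  have e1 : Real.Gamma (2*θ+2*q+1) = Real.Gamma (2*z) := by rw [hz]; ring_nf
  have e2 : Real.Gamma ((2*θ+2*q+1)/2) = Real.Gamma z := by rw [hz]; ring_nf
  have e3 : Real.Gamma (q+θ+1) = Real.Gamma (z + 1/2) := by rw [hz]; ring_nf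
  have c1 : ((1:ℝ)/2) ^ (-(2*θ+2*q+1)/2) = 2 ^ z := by
    rw [show ((1:ℝ)/2) = (2:ℝ) ^ (-1:ℝ) by norm_num [Real.rpow_neg_one],
      ← Real.rpow_mul (by norm_num)]
    congr 1
    rw [hz]; ring
  have c2 : Real.sqrt (2*π) = 2 ^ (1/2:ℝ) * Real.sqrt π := by
    rw [Real.sqrt_mul (by norm_num), Real.sqrt_eq_rpow]
  have hsqrtπ : (0:ℝ) < Real.sqrt π := Real.sqrt_pos.mpr hπ
  rw [e1, e2, e3, c1, c2]
  have hG2z : Real.Gamma (2*z) = Real.Gamma z * Real.Gamma (z+1/2) / ((2:ℝ) ^ (1-2*z) * Real.sqrt π) := by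
    rw [eq_div_iff (by positivity), hdup]; ring
  rw [hG2z]
  have hrw : (2:ℝ) ^ (-θ-q) = 2 ^ z * ((2:ℝ) ^ (1-2*z) / 2 ^ (1/2:ℝ)) := by
    rw [div_eq_mul_inv, ← Real.rpow_neg (by norm_num), ← Real.rpow_add (by norm_num),
      ← Real.rpow_add (by norm_num)]
    congr 1
    rw [hz]; ring
  rw [hrw]
  have h2z : (0:ℝ) < 2 ^ (1-2*z) := Real.rpow_pos_of_pos (by norm_num) _
  have h12 : (0:ℝ) < 2 ^ (1/2:ℝ) := Real.rpow_pos_of_pos (by norm_num) _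
  have hzpos : (0:ℝ) < 2 ^ z := Real.rpow_pos_of_pos (by norm_num) _
  field_simp


end HMAux

/-- The Hermite function of index `-2q` for `q > 0`, via its integral representation. -/
noncomputable def hermiteNeg (q l : ℝ) : ℝ :=
  (1 / Real.Gamma (2 * q)) *
    ∫ t in Set.Ioi (0 : ℝ), t ^ (2 * q - 1) * Real.exp (-t ^ 2 / 2 - l * t)

theorem hermite_mellin_identity (q θ : ℝ) (hq : 0 < q) (hθ : θ > -(1 / 2)) :
    2 * ∫ l in Set.Ioi (0 : ℝ),
        l ^ (2 * θ) * hermiteNeg q l * ((Real.sqrt (2 * Real.pi))⁻¹ * Real.exp (-l ^ 2 / 2))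
      = 2 ^ (-θ - q) * Real.Gamma (2 * θ + 1) / Real.Gamma (q + θ + 1) := by
  have hθ' : (-1:ℝ) < 2 * θ := by linarith
  have hq' : (-1:ℝ) < 2 * q - 1 := by linarith
  set K : ℝ → ℝ → ℝ := fun l s =>
    if l < s then l ^ (2*θ) * (s - l) ^ (2*q - 1) * Real.exp (-s^2/2) else 0 with hK
  set C : ℝ := (Real.sqrt (2*π))⁻¹ * (Real.Gamma (2*q))⁻¹ with hC
  set Bc : ℝ := Real.Gamma (2*θ+1) * Real.Gamma (2*q) / Real.Gamma (2*θ+2*q+1) with hBc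
  -- Step A: pointwise identity for the outer integrand
  have hA : ∀ l ∈ Set.Ioi (0:ℝ),
      l ^ (2*θ) * hermiteNeg q l * ((Real.sqrt (2*π))⁻¹ * Real.exp (-l^2/2))
        = C * ∫ s in Set.Ioi (0:ℝ), K l s := by
    intro l hl
    have hl0 : 0 < l := hl
    have h1 : (∫ t in Set.Ioi (0:ℝ), t ^ (2*q-1) * Real.exp (-t^2/2 - l*t)) * Real.exp (-l^2/2)
        = ∫ t in Set.Ioi (0:ℝ), t ^ (2*q-1) * Real.exp (-(t+l)^2/2) := by
      rw [← integral_mul_const]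
      refine setIntegral_congr_fun measurableSet_Ioi fun t _ => ?_
      rw [mul_assoc, ← Real.exp_add]
      congr 2
      ring
    have h2 : ∫ t in Set.Ioi (0:ℝ), t ^ (2*q-1) * Real.exp (-(t+l)^2/2)
        = ∫ s in Set.Ioi l, (s - l) ^ (2*q-1) * Real.exp (-s^2/2) := by
      calc ∫ t in Set.Ioi (0:ℝ), t ^ (2*q-1) * Real.exp (-(t+l)^2/2)
          = ∫ t in Set.Ioi (0:ℝ),
              (fun s => (s - l) ^ (2*q-1) * Real.exp (-s^2/2)) (t + l) := by
            refine setIntegral_congr_fun measurableSet_Ioi fun t _ => ?_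
            simp
        _ = ∫ t, (Set.Ioi (0:ℝ)).indicator
              (fun t => (fun s => (s - l) ^ (2*q-1) * Real.exp (-s^2/2)) (t + l)) t := by
            rw [integral_indicator measurableSet_Ioi]
        _ = ∫ t, (Set.Ioi l).indicator
              (fun s => (s - l) ^ (2*q-1) * Real.exp (-s^2/2)) (t + l) := by
            congr 1
            funext t
            simp only [Set.indicator_apply, Set.mem_Ioi, lt_add_iff_pos_left]
        _ = ∫ s, (Set.Ioi l).indicator
              (fun s => (s - l) ^ (2*q-1) * Real.exp (-s^2/2)) s :=
            integral_add_right_eq_self _ l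
        _ = _ := integral_indicator measurableSet_Ioi
    have h3 : ∫ s in Set.Ioi (0:ℝ), K l s
        = l ^ (2*θ) * ∫ s in Set.Ioi l, (s - l) ^ (2*q-1) * Real.exp (-s^2/2) := by
      have heq : ∀ s ∈ Set.Ioi (0:ℝ), K l s
          = (Set.Ioi l).indicator
              (fun s => l ^ (2*θ) * ((s - l) ^ (2*q-1) * Real.exp (-s^2/2))) s := by
        intro s _
        simp only [hK, Set.indicator_apply, Set.mem_Ioi, mul_assoc]
      rw [setIntegral_congr_fun measurableSet_Ioi heq,
        setIntegral_indicator measurableSet_Ioi, Set.Ioi_inter_Ioi,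
        sup_eq_right.mpr hl0.le, integral_const_mul]
    rw [hermiteNeg, h3, ← h2, ← h1, hC]
    ring
  rw [setIntegral_congr_fun measurableSet_Ioi hA, integral_const_mul]
  -- inner integral after swapping
  have hInner : ∀ s ∈ Set.Ioi (0:ℝ),
      (∫ l in Set.Ioi (0:ℝ), K l s) = s ^ (2*θ+2*q) * Bc * Real.exp (-s^2/2) := by
    intro s hs
    have heq : ∀ l ∈ Set.Ioi (0:ℝ), K l s
        = (Set.Iio s).indicator
            (fun l => l ^ (2*θ) * (s - l) ^ (2*q-1) * Real.exp (-s^2/2)) l := by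
      intro l _
      simp only [hK, Set.indicator_apply, Set.mem_Iio]
    rw [setIntegral_congr_fun measurableSet_Ioi heq,
      setIntegral_indicator measurableSet_Iio, Set.Ioi_inter_Iio, integral_mul_const,
      hm_beta_value hθ' hq' hs]
    rw [show 2*θ + (2*q-1) + 1 = 2*θ+2*q by ring, show 2*q - 1 + 1 = 2*q by ring,
      show 2*θ + (2*q-1) + 2 = 2*θ+2*q+1 by ring, hBc]
  -- integrability for Fubini
  have hKnn : ∀ s : ℝ, ∀ l ∈ Set.Ioi (0:ℝ), 0 ≤ K l s := by
    intro s l hl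
    simp only [hK]
    split
    · rename_i h
      have hl' : (0:ℝ) < l := hl
      have : (0:ℝ) < s - l := by linarith
      positivity
    · exact le_rfl
  have hKm : Measurable (Function.uncurry K) := by
    have : Function.uncurry K = fun p : ℝ × ℝ =>
        if p.1 < p.2 then p.1 ^ (2*θ) * (p.2 - p.1) ^ (2*q-1) * Real.exp (-p.2^2/2) else 0 := rfl
    rw [this]
    exact Measurable.ite (measurableSet_lt measurable_fst measurable_snd) (by fun_prop)
      measurable_const
  have hsection : ∀ s ∈ Set.Ioi (0:ℝ),
      Integrable (fun l => K l s) (volume.restrict (Set.Ioi (0:ℝ))) := by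
    intro s hs
    have heq : (fun l => K l s) = (Set.Iio s).indicator
        (fun l => l ^ (2*θ) * (s - l) ^ (2*q-1) * Real.exp (-s^2/2)) := by
      funext l
      simp only [hK, Set.indicator_apply, Set.mem_Iio]
    rw [heq, integrable_indicator_iff measurableSet_Iio, IntegrableOn,
      Measure.restrict_restrict measurableSet_Iio, Set.Iio_inter_Ioi]
    exact (hm_integrableOn_beta hθ' hq' hs).mul_const _
  have hGauss : IntegrableOn (fun s : ℝ => s ^ (2*θ+2*q) * Bc * Real.exp (-s^2/2))
      (Set.Ioi (0:ℝ)) := by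
    have base := integrableOn_rpow_mul_exp_neg_mul_sq (show (0:ℝ) < 1/2 by norm_num)
      (show (-1:ℝ) < 2*θ+2*q by linarith)
    refine IntegrableOn.congr_fun (base.mul_const Bc) (fun s _ => ?_) measurableSet_Ioi
    rw [show -(1/2) * s^2 = -s^2/2 by ring]
    ring
  have hnorm : Integrable (fun s => ∫ l in Set.Ioi (0:ℝ), ‖K l s‖)
      (volume.restrict (Set.Ioi (0:ℝ))) := by
    refine hGauss.congr ?_
    refine (ae_restrict_of_forall_mem measurableSet_Ioi fun s hs => ?_)
    show s ^ (2*θ+2*q) * Bc * Real.exp (-s^2/2) = ∫ l in Set.Ioi (0:ℝ), ‖K l s‖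
    rw [← hInner s hs]
    refine setIntegral_congr_fun measurableSet_Ioi fun l hl => ?_
    rw [Real.norm_eq_abs, abs_of_nonneg (hKnn s l hl)]
  have hint : Integrable (Function.uncurry K)
      ((volume.restrict (Set.Ioi (0:ℝ))).prod (volume.restrict (Set.Ioi (0:ℝ)))) := by
    rw [integrable_prod_iff' hKm.aestronglyMeasurable]
    constructor
    · filter_upwards [ae_restrict_mem measurableSet_Ioi] with s hs using hsection s hs
    · exact hnorm
  rw [integral_integral_swap hint]
  rw [setIntegral_congr_fun measurableSet_Ioi hInner]
  have hval : ∫ s in Set.Ioi (0:ℝ), s ^ (2*θ+2*q) * Bc * Real.exp (-s^2/2)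
      = Bc * (((1:ℝ)/2) ^ (-(2*θ+2*q+1)/2) * (1/2) * Real.Gamma ((2*θ+2*q+1)/2)) := by
    have hrw : ∀ s : ℝ, s ^ (2*θ+2*q) * Bc * Real.exp (-s^2/2)
        = Bc * (s ^ (2*θ+2*q) * Real.exp (-(1/2) * s ^ (2:ℝ))) := by
      intro s
      rw [show s ^ (2:ℝ) = s ^ 2 from by
        rw [show (2:ℝ) = ((2:ℕ):ℝ) by norm_num, Real.rpow_natCast],
        show -(1/2) * s^2 = -s^2/2 by ring]
      ring
    simp_rw [hrw]
    rw [integral_const_mul, integral_rpow_mul_exp_neg_mul_rpow (by norm_num : (0:ℝ) < 2)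
      (by linarith : (-1:ℝ) < 2*θ+2*q) (show (0:ℝ) < 1/2 by norm_num)]
  rw [hval, hC, hBc]
  exact hm_final q θ hq (by linarith)
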